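/- No functional extension Y of a set X satisfies both the principle Ind (for all distinct ξ, η ∈ Y there exist disjoint subsets A, B ⊆ X with ξ ∈ *A and η ∈ *B) and the principle Poss (for every family F of subsets of X with the finite intersection property, ⋂_{A ∈ F} *A ≠ ∅). Equivalently, the S-topology of a functional extension is never both Hausdorff and quasi-compact. -/

import Mathlib

attribute [local instance] Classical.propDecidable

/-- A functional extension of `X`: a proper superset `Y ⊇ X` (given via an injective,
non-surjective inclusion) with two designated distinct elements `0, 1 ∈ X`, together with
a distinguished extension `star f : Y → Y` of every `f : X → X`, preserving compositions
and equalizers, and with directed Puritz preorder. -/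
structure FunctionalExtension (X Y : Type*) where
  zero : X
  one : X
  zero_ne_one : zero ≠ one
  incl : X → Y
  incl_injective : Function.Injective incl
  proper : ¬ Function.Surjective incl
  star : (X → X) → Y → Y
  star_incl : ∀ (f : X → X) (x : X), star f (incl x) = incl (f x)
  comp : ∀ f g : X → X, star (g ∘ f) = star g ∘ star f
  equ : ∀ f g : X → X,
    star (fun x => if f x = g x then one else zero) =
      fun ξ => if star f ξ = star g ξ then incl one else incl zero
  dir : ∀ ξ η : Y, ∃ (p₁ p₂ : X → X) (ζ : Y), star p₁ ζ = ξ ∧ star p₂ ζ = η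

namespace FunctionalExtension

variable {X Y : Type*}

/-- The star-extension `*A ⊆ Y` of a subset `A ⊆ X`:
the set where the extension of the characteristic function of `A` takes the value `1`. -/
def sets (E : FunctionalExtension X Y) (A : Set X) : Set Y :=
  {ξ | E.star (fun x => if x ∈ A then E.one else E.zero) ξ = E.incl E.one}

/-- The S-topology on `Y`: the topology with basis `{*A : A ⊆ X}`. -/
def sTopology (E : FunctionalExtension X Y) : TopologicalSpace Y :=
  TopologicalSpace.generateFrom (Set.range E.sets)

end FunctionalExtension

namespace FunctionalExtension

variable {X Y : Type*}

variable (E : FunctionalExtension X Y)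

lemma star_comp_apply (f g : X → X) (ξ : Y) :
    E.star (g ∘ f) ξ = E.star g (E.star f ξ) := by
  rw [E.comp]; rfl

lemma star_id_apply (ξ : Y) : E.star id ξ = ξ := by
  obtain ⟨p₁, p₂, ζ, h₁, _⟩ := E.dir ξ ξ
  have : E.star (id ∘ p₁) ζ = E.star id (E.star p₁ ζ) := E.star_comp_apply p₁ id ζ
  simpa [h₁] using this.symm

lemma star_const_one (ξ : Y) : E.star (fun _ => E.one) ξ = E.incl E.one := by
  have h := E.equ id id
  have h1 : (fun x : X => if id x = id x then E.one else E.zero) = fun _ => E.one := by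
    funext x; simp
  rw [h1] at h
  have := congrFun h ξ
  simpa using this

lemma star_const_zero (ξ : Y) : E.star (fun _ => E.zero) ξ = E.incl E.zero := by
  have h := E.equ (fun _ => E.zero) (fun _ => E.one)
  have h1 : (fun x : X => if (fun _ => E.zero) x = (fun _ => E.one) x then E.one else E.zero)
      = fun _ => E.zero := by
    funext x; simp [E.zero_ne_one]
  rw [h1] at h
  have h2 := congrFun h ξ
  simp only [E.star_const_one] at h2
  by_cases hc : E.star (fun _ => E.zero) ξ = E.incl E.one
  · -- contradiction via swap
    exfalso
    set t : X → X := fun x => if x = E.zero then E.one else if x = E.one then E.zero else x with ht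
    have hcomp : (fun _ : X => E.one) = t ∘ (fun _ => E.zero) := by
      funext x; simp [ht]
    have := E.star_comp_apply (fun _ => E.zero) t ξ
    rw [← hcomp] at this
    rw [E.star_const_one, hc, E.star_incl] at this
    have hone : t E.one = E.zero := by simp [ht, E.zero_ne_one, Ne.symm E.zero_ne_one]
    rw [hone] at this
    exact E.zero_ne_one (E.incl_injective this).symm
  · rw [if_neg (by simpa using hc)] at h2
    exact h2

lemma star_const (c : X) (ξ : Y) : E.star (fun _ => c) ξ = E.incl c := by
  have hcomp : (fun _ : X => c) = (fun _ : X => c) ∘ (fun _ : X => E.zero) := rfl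
  rw [hcomp, E.star_comp_apply, E.star_const_zero, E.star_incl]

end FunctionalExtension

namespace FunctionalExtension
variable {X Y : Type*} (E : FunctionalExtension X Y)

/-- characteristic function -/
noncomputable def chi (A : Set X) : X → X := fun x => if x ∈ A then E.one else E.zero

lemma mem_sets {A : Set X} {ξ : Y} : ξ ∈ E.sets A ↔ E.star (E.chi A) ξ = E.incl E.one :=
  Iff.rfl

lemma incl_mem_sets {A : Set X} {x : X} : E.incl x ∈ E.sets A ↔ x ∈ A := by
  rw [mem_sets, E.star_incl]
  constructor
  · intro h
    by_contra hx
    rw [show E.chi A x = E.zero by simp [chi, hx]] at h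
    exact E.zero_ne_one (E.incl_injective h)
  · intro h; rw [show E.chi A x = E.one by simp [chi, h]]

lemma star_chi_values (A : Set X) (ξ : Y) :
    E.star (E.chi A) ξ = E.incl E.one ∨ E.star (E.chi A) ξ = E.incl E.zero := by
  have h := E.equ (E.chi A) (fun _ => E.one)
  have h1 : (fun x : X => if E.chi A x = (fun _ => E.one) x then E.one else E.zero)
      = E.chi A := by
    funext x
    by_cases hx : x ∈ A <;> simp [chi, hx, E.zero_ne_one]
  rw [h1] at h
  have h2 := congrFun h ξ
  rw [E.star_const_one] at h2
  by_cases hc : E.star (E.chi A) ξ = E.incl E.one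
  · exact Or.inl hc
  · right; rw [h2, if_neg hc]

lemma not_mem_sets {A : Set X} {ξ : Y} :
    ξ ∉ E.sets A ↔ E.star (E.chi A) ξ = E.incl E.zero := by
  rw [mem_sets]
  rcases E.star_chi_values A ξ with h | h <;> rw [h]
  · constructor
    · intro hc; exact absurd rfl hc
    · intro hc _; exact E.zero_ne_one (E.incl_injective hc.symm)
  · constructor
    · intro _; rfl
    · intro _ hc; exact E.zero_ne_one (E.incl_injective hc)

lemma mem_sets_compl {A : Set X} {ξ : Y} : ξ ∈ E.sets Aᶜ ↔ ξ ∉ E.sets A := by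
  have h := E.equ (E.chi A) (fun _ => E.zero)
  have h1 : (fun x : X => if E.chi A x = (fun _ => E.zero) x then E.one else E.zero)
      = E.chi Aᶜ := by
    funext x
    by_cases hx : x ∈ A <;> simp [chi, hx, E.zero_ne_one, Ne.symm E.zero_ne_one]
  rw [h1] at h
  have h2 := congrFun h ξ
  rw [E.star_const_zero] at h2
  rw [mem_sets, not_mem_sets, h2]
  constructor
  · intro hh
    by_contra hc
    rw [if_neg hc] at hh
    exact E.zero_ne_one (E.incl_injective hh)
  · intro hh; rw [if_pos hh]

lemma mem_sets_preimage {A : Set X} (f : X → X) {ξ : Y} :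
    ξ ∈ E.sets (f ⁻¹' A) ↔ E.star f ξ ∈ E.sets A := by
  have h1 : E.chi (f ⁻¹' A) = E.chi A ∘ f := rfl
  rw [mem_sets, mem_sets, h1, E.star_comp_apply]

lemma sets_empty : E.sets (∅ : Set X) = ∅ := by
  ext ξ
  simp only [Set.mem_empty_iff_false, iff_false]
  rw [mem_sets]
  have : E.chi (∅ : Set X) = fun _ => E.zero := by funext x; simp [chi]
  rw [this, E.star_const_zero]
  exact fun h => E.zero_ne_one (E.incl_injective h)

lemma sets_univ : E.sets (Set.univ : Set X) = Set.univ := by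
  ext ξ
  simp only [Set.mem_univ, iff_true]
  rw [mem_sets]
  have : E.chi (Set.univ : Set X) = fun _ => E.one := by funext x; simp [chi]
  rw [this, E.star_const_one]

lemma eq_incl_of_mem_singleton {x : X} {ξ : Y} (h : ξ ∈ E.sets {x}) : ξ = E.incl x := by
  have he := E.equ id (fun _ => x)
  have h1 : (fun y : X => if id y = (fun _ => x) y then E.one else E.zero)
      = E.chi {x} := by
    funext y; simp [chi, Set.mem_singleton_iff]
  rw [h1] at he
  have h2 := congrFun he ξ
  rw [E.star_id_apply, E.star_const] at h2
  rw [mem_sets, h2] at h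
  by_contra hc
  rw [if_neg hc] at h
  exact E.zero_ne_one (E.incl_injective h)

end FunctionalExtension

namespace FunctionalExtension
variable {X Y : Type*} (E : FunctionalExtension X Y)

/-- If X has only the two elements zero, one, a proper functional extension is contradictory. -/
lemma two_elem_collapse (h2 : ∀ x : X, x = E.zero ∨ x = E.one) : False := by
  obtain ⟨ξ, hξ⟩ : ∃ ξ : Y, ∀ x, E.incl x ≠ ξ := by
    rcases not_forall.1 E.proper with ⟨ξ, hξ⟩
    exact ⟨ξ, fun x hx => hξ ⟨x, hx⟩⟩
  set u : X → X := fun x => if x = E.one then E.one else E.zero with hu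
  have hsu : E.star u ξ = E.incl E.zero := by
    have he := E.equ id (fun _ => E.one)
    have h1 : (fun y : X => if id y = (fun _ => E.one) y then E.one else E.zero) = u := rfl
    rw [h1] at he
    have h2' := congrFun he ξ
    rw [E.star_id_apply, E.star_const_one, if_neg (fun hc => hξ E.one hc.symm)] at h2'
    exact h2'
  set v : X → X := fun x => if x = E.zero then E.one else E.zero with hv
  have hsv : E.star v ξ = E.incl E.zero := by
    have he := E.equ id (fun _ => E.zero)
    have h1 : (fun y : X => if id y = (fun _ => E.zero) y then E.one else E.zero) = v := rfl
    rw [h1] at he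
    have h2' := congrFun he ξ
    rw [E.star_id_apply, E.star_const_zero, if_neg (fun hc => hξ E.zero hc.symm)] at h2'
    exact h2'
  have hsv' : E.star v ξ = E.incl E.one := by
    have he := E.equ u (fun _ => E.zero)
    have h1 : (fun y : X => if u y = (fun _ => E.zero) y then E.one else E.zero) = v := by
      funext y
      rcases h2 y with h | h <;> subst h <;>
        simp [hu, hv, E.zero_ne_one, Ne.symm E.zero_ne_one]
    rw [h1] at he
    have h2' := congrFun he ξ
    rw [hsu, E.star_const_zero, if_pos rfl] at h2'
    exact h2'
  exact E.zero_ne_one (E.incl_injective (hsv ▸ hsv'))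

variable {E}
variable (htwo : ∃ t : X, t ≠ E.zero ∧ t ≠ E.one)

include htwo in
lemma mem_sets_inter {A B : Set X} {ξ : Y} :
    ξ ∈ E.sets (A ∩ B) ↔ ξ ∈ E.sets A ∧ ξ ∈ E.sets B := by
  obtain ⟨t, htz, hto⟩ := htwo
  set r : X → X := fun y => if y = E.one then E.one else t with hr
  have hg : E.chi (A ∩ B) =
      fun x => if E.chi A x = (r ∘ E.chi B) x then E.one else E.zero := by
    funext x
    by_cases hA : x ∈ A <;> by_cases hB : x ∈ B <;>
      simp [chi, hr, hA, hB, E.zero_ne_one, htz, hto, Ne.symm htz, Ne.symm hto, Function.comp]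
  have he := E.equ (E.chi A) (r ∘ E.chi B)
  rw [← hg] at he
  have h2 := congrFun he ξ
  have hB2 : E.star (r ∘ E.chi B) ξ =
      if ξ ∈ E.sets B then E.incl E.one else E.incl t := by
    rw [E.star_comp_apply]
    by_cases hB : ξ ∈ E.sets B
    · rw [if_pos hB, (E.mem_sets).1 hB, E.star_incl]
      simp [hr]
    · rw [if_neg hB, (E.not_mem_sets).1 hB, E.star_incl]
      simp [hr, E.zero_ne_one]
  rw [hB2] at h2
  constructor
  · intro h
    rw [mem_sets, h2] at h
    by_cases hB : ξ ∈ E.sets B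
    · rw [if_pos hB] at h
      by_cases hc : E.star (E.chi A) ξ = E.incl E.one
      · exact ⟨(E.mem_sets).2 hc, hB⟩
      · rw [if_neg hc] at h
        exact absurd (E.incl_injective h) E.zero_ne_one
    · rw [if_neg hB] at h
      rcases E.star_chi_values A ξ with hv | hv <;> rw [hv] at h
      · by_cases hc : E.incl E.one = E.incl t
        · exact absurd (E.incl_injective hc).symm hto
        · rw [if_neg hc] at h
          exact absurd (E.incl_injective h) E.zero_ne_one
      · by_cases hc : E.incl E.zero = E.incl t
        · exact absurd (E.incl_injective hc).symm htz
        · rw [if_neg hc] at h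
          exact absurd (E.incl_injective h) E.zero_ne_one
  · rintro ⟨hA, hB⟩
    rw [mem_sets, h2, if_pos hB, if_pos ((E.mem_sets).1 hA)]

include htwo in
lemma sets_mono {A B : Set X} (hAB : A ⊆ B) : E.sets A ⊆ E.sets B := by
  intro ξ hξ
  have : A ∩ B = A := Set.inter_eq_left.2 hAB
  exact ((mem_sets_inter htwo).1 (this ▸ hξ)).2

include htwo in
lemma disjoint_sets {A B : Set X} {ξ : Y} (hA : ξ ∈ E.sets A) (hB : ξ ∈ E.sets B)
    (hd : A ∩ B = ∅) : False := by
  have : ξ ∈ E.sets (A ∩ B) := (mem_sets_inter htwo).2 ⟨hA, hB⟩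
  rw [hd, E.sets_empty] at this
  exact this

include htwo in
lemma mem_sets_sInter {G : Set (Set X)} (hG : G.Finite) {ξ : Y}
    (h : ∀ S ∈ G, ξ ∈ E.sets S) : ξ ∈ E.sets (⋂₀ G) := by
  revert h
  refine Set.Finite.induction_on G hG (fun _ => ?_) ?_
  · rw [Set.sInter_empty, E.sets_univ]; trivial
  · intro S G _ _ ih h
    rw [Set.sInter_insert]
    exact (mem_sets_inter htwo).2
      ⟨h S (Set.mem_insert _ _), ih (fun T hT => h T (Set.mem_insert_of_mem _ hT))⟩

end FunctionalExtension

namespace FunctionalExtension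
variable {X Y : Type*} {E : FunctionalExtension X Y}

lemma not_mem_of_finite (htwo : ∃ t : X, t ≠ E.zero ∧ t ≠ E.one)
    {ξ : Y} (hξ : ∀ x, E.incl x ≠ ξ) {A : Set X} (hA : A.Finite) : ξ ∉ E.sets A := by
  refine Set.Finite.induction_on A hA ?_ @?_
  · rw [E.sets_empty]; exact fun h => h
  · intro a A haA hAfin ih hmem
    by_cases ha : ξ ∈ E.sets {a}
    · exact hξ a (E.eq_incl_of_mem_singleton ha).symm
    · have hac : ξ ∈ E.sets ({a}ᶜ) := (E.mem_sets_compl).2 ha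
      have hmm : ξ ∈ E.sets (insert a A ∩ {a}ᶜ) := (mem_sets_inter htwo).2 ⟨hmem, hac⟩
      have hsub : insert a A ∩ ({a}ᶜ : Set X) ⊆ A := by
        rintro x ⟨hx1, hx2⟩
        rcases hx1 with rfl | hx1
        · exact absurd rfl hx2
        · exact hx1
      exact ih (sets_mono htwo hsub hmm)

theorem not_ind_and_poss (E : FunctionalExtension X Y) :
    ¬ ((∀ ξ η : Y, ξ ≠ η →
          ∃ A B : Set X, Disjoint A B ∧ ξ ∈ E.sets A ∧ η ∈ E.sets B) ∧
        (∀ F : Set (Set X), (∀ G ⊆ F, G.Finite → (⋂₀ G).Nonempty) →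
          (⋂ A ∈ F, E.sets A).Nonempty)) := by
  rintro ⟨hInd, hPoss⟩
  by_cases h2 : ∀ x : X, x = E.zero ∨ x = E.one
  · exact E.two_elem_collapse h2
  push_neg at h2
  obtain ⟨t, htz, hto⟩ := h2
  have htwo : ∃ t : X, t ≠ E.zero ∧ t ≠ E.one := ⟨t, htz, hto⟩
  obtain ⟨ξ₀, hξ₀⟩ : ∃ ξ : Y, ∀ x, E.incl x ≠ ξ := by
    rcases not_forall.1 E.proper with ⟨ξ, hξ⟩
    exact ⟨ξ, fun x hx => hξ ⟨x, hx⟩⟩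
  -- every set "in the ultrafilter of ξ₀" is infinite
  have hInfMem : ∀ A : Set X, ξ₀ ∈ E.sets A → A.Infinite := by
    intro A hA
    by_contra h
    rw [Set.not_infinite] at h
    exact not_mem_of_finite htwo hξ₀ h hA
  have hXinf : Infinite X := by
    rw [← Set.infinite_univ_iff]
    exact hInfMem Set.univ (by rw [E.sets_univ]; trivial)
  have : Nonempty (X × X ≃ X) := by
    apply Cardinal.eq.mp
    simp only [Cardinal.mk_prod, Cardinal.lift_id]
    exact Cardinal.mul_eq_self (Cardinal.aleph0_le_mk X)
  obtain ⟨e⟩ := this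
  set π : X × X → X := e.toFun with hπdef
  set f : X → X := fun x => (e.invFun x).1 with hf
  set g : X → X := fun x => (e.invFun x).2 with hg
  have hfπ : ∀ p : X × X, f (π p) = p.1 := by intro p; simp [hf, hπdef]
  have hgπ : ∀ p : X × X, g (π p) = p.2 := by intro p; simp [hg, hπdef]
  set D : Set X → Set X := fun A => π '' {p : X × X | p.1 ∈ A ∧ p.2 ∈ A ∧ p.1 ≠ p.2}
    with hD
  set F : Set (Set X) := {S | ∃ A : Set X, ξ₀ ∈ E.sets A ∧ S = D A} with hF
  have hDmono : ∀ {A B : Set X}, A ⊆ B → D A ⊆ D B := by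
    rintro A B hAB x ⟨p, ⟨h1, h2, h3⟩, rfl⟩
    exact ⟨p, ⟨hAB h1, hAB h2, h3⟩, rfl⟩
  -- F has the finite intersection property
  have hFIP : ∀ G ⊆ F, G.Finite → (⋂₀ G).Nonempty := by
    intro G hGF hGfin
    set c : Set X → Set X := fun S =>
      if h : ∃ A : Set X, ξ₀ ∈ E.sets A ∧ S = D A then Classical.choose h else Set.univ
      with hc
    have hcspec : ∀ S ∈ G, ξ₀ ∈ E.sets (c S) ∧ S = D (c S) := by
      intro S hS
      have hSF := hGF hS
      rw [hF, Set.mem_setOf_eq] at hSF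
      rw [hc]
      simp only [dif_pos hSF]
      exact Classical.choose_spec hSF
    set A : Set X := ⋂₀ (c '' G) with hA
    have hAmem : ξ₀ ∈ E.sets A := by
      apply mem_sets_sInter htwo (hGfin.image c)
      rintro T ⟨S, hS, rfl⟩
      exact (hcspec S hS).1
    obtain ⟨a, ha, b, hb, hab⟩ := (hInfMem A hAmem).nontrivial
    refine ⟨π (a, b), ?_⟩
    intro S hS
    rw [(hcspec S hS).2]
    refine ⟨(a, b), ⟨?_, ?_, hab⟩, rfl⟩
    · exact Set.mem_sInter.1 ha (c S) ⟨S, hS, rfl⟩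
    · exact Set.mem_sInter.1 hb (c S) ⟨S, hS, rfl⟩
  obtain ⟨η, hη0⟩ := hPoss F hFIP
  have hη : ∀ A : Set X, ξ₀ ∈ E.sets A → η ∈ E.sets (D A) := by
    intro A hA
    have : D A ∈ F := ⟨A, hA, rfl⟩
    exact Set.mem_iInter₂.1 hη0 (D A) this
  -- star f η = star g η
  have heq : E.star f η = E.star g η := by
    by_contra hne
    obtain ⟨P, Q, hPQ, hP, hQ⟩ := hInd _ _ hne
    have hfP : η ∈ E.sets (f ⁻¹' P) := (E.mem_sets_preimage f).2 hP
    have hgQ : η ∈ E.sets (g ⁻¹' Q) := (E.mem_sets_preimage g).2 hQ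
    have hPU : ξ₀ ∈ E.sets P := by
      by_contra h
      have hPc : ξ₀ ∈ E.sets Pᶜ := (E.mem_sets_compl).2 h
      refine disjoint_sets htwo hfP (hη _ hPc) ?_
      ext x
      simp only [Set.mem_inter_iff, Set.mem_empty_iff_false, iff_false, not_and]
      rintro hx1 ⟨p, ⟨hp1, _, _⟩, rfl⟩
      rw [Set.mem_preimage, hfπ] at hx1
      exact hp1 hx1
    have hQU : ξ₀ ∈ E.sets Q := by
      by_contra h
      have hQc : ξ₀ ∈ E.sets Qᶜ := (E.mem_sets_compl).2 h
      refine disjoint_sets htwo hgQ (hη _ hQc) ?_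
      ext x
      simp only [Set.mem_inter_iff, Set.mem_empty_iff_false, iff_false, not_and]
      rintro hx1 ⟨p, ⟨_, hp2, _⟩, rfl⟩
      rw [Set.mem_preimage, hgπ] at hx1
      exact hp2 hx1
    exact disjoint_sets htwo hPU hQU (Set.disjoint_iff_inter_eq_empty.1 hPQ)
  -- hence the equalizer of f and g is a member at η
  have hE : η ∈ E.sets {x | f x = g x} := by
    have he := congrFun (E.equ f g) η
    rw [if_pos heq] at he
    have hchi : (fun x => if f x = g x then E.one else E.zero) = E.chi {x | f x = g x} := rfl
    rw [hchi] at he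
    exact (E.mem_sets).2 he
  have hDuniv : η ∈ E.sets (D Set.univ) := hη _ (by rw [E.sets_univ]; trivial)
  refine disjoint_sets htwo hE hDuniv ?_
  ext x
  simp only [Set.mem_inter_iff, Set.mem_empty_iff_false, iff_false, not_and]
  rintro hx1 ⟨p, ⟨_, _, hp3⟩, rfl⟩
  rw [Set.mem_setOf_eq, hfπ, hgπ] at hx1
  exact hp3 hx1

end FunctionalExtension

namespace FunctionalExtension
variable {X Y : Type*} {E : FunctionalExtension X Y}

lemma isBasis (htwo : ∃ t : X, t ≠ E.zero ∧ t ≠ E.one) :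
    @TopologicalSpace.IsTopologicalBasis Y E.sTopology (Set.range E.sets) := by
  letI := E.sTopology
  refine ⟨?_, ?_, rfl⟩
  · rintro t₁ ⟨A, rfl⟩ t₂ ⟨B, rfl⟩ x hx
    refine ⟨E.sets (A ∩ B), ⟨A ∩ B, rfl⟩, (mem_sets_inter htwo).2 ⟨hx.1, hx.2⟩, ?_⟩
    intro y hy
    exact ⟨((mem_sets_inter htwo).1 hy).1, ((mem_sets_inter htwo).1 hy).2⟩
  · apply Set.eq_univ_iff_forall.2
    intro ξ
    exact ⟨E.sets Set.univ, ⟨Set.univ, rfl⟩, by rw [E.sets_univ]; trivial⟩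

theorem stmt18' (E : FunctionalExtension X Y) :
    ¬ ((∀ ξ η : Y, ξ ≠ η →
          ∃ A B : Set X, Disjoint A B ∧ ξ ∈ E.sets A ∧ η ∈ E.sets B) ∧
        (∀ F : Set (Set X), (∀ G ⊆ F, G.Finite → (⋂₀ G).Nonempty) →
          (⋂ A ∈ F, E.sets A).Nonempty)) ∧
    ¬ (@T2Space Y E.sTopology ∧ @CompactSpace Y E.sTopology) := by
  refine ⟨E.not_ind_and_poss, ?_⟩
  rintro ⟨hT2, hCpt⟩
  apply E.not_ind_and_poss
  by_cases h2 : ∀ x : X, x = E.zero ∨ x = E.one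
  · exact (E.two_elem_collapse h2).elim
  push_neg at h2
  obtain ⟨t, htz, hto⟩ := h2
  have htwo : ∃ t : X, t ≠ E.zero ∧ t ≠ E.one := ⟨t, htz, hto⟩
  letI := E.sTopology
  haveI := hT2
  haveI := hCpt
  have hb := isBasis (E := E) htwo
  constructor
  · -- Ind from T2
    intro ξ η hne
    obtain ⟨u, v, hu, hv, hξu, hηv, huv⟩ := t2_separation hne
    obtain ⟨s₁, ⟨A, rfl⟩, hξA, hAu⟩ := hb.exists_subset_of_mem_open hξu hu
    obtain ⟨s₂, ⟨B, rfl⟩, hηB, hBv⟩ := hb.exists_subset_of_mem_open hηv hv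
    refine ⟨A, B, ?_, hξA, hηB⟩
    rw [Set.disjoint_iff_inter_eq_empty]
    by_contra hne'
    obtain ⟨x, hxA, hxB⟩ := Set.nonempty_iff_ne_empty.2 hne'
    exact Set.disjoint_left.1 huv (hAu (E.incl_mem_sets.2 hxA)) (hBv (E.incl_mem_sets.2 hxB))
  · -- Poss from compactness
    intro F hFIP
    have hclosed : ∀ S : F, IsClosed (E.sets (S : Set X)) := by
      intro S
      rw [← isOpen_compl_iff]
      have hcc : (E.sets (S : Set X))ᶜ = E.sets ((S : Set X)ᶜ) := by
        ext ξ
        rw [Set.mem_compl_iff]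
        exact (mem_sets_compl E).symm
      rw [hcc]
      exact hb.isOpen ⟨_, rfl⟩
    have hfin : ∀ u : Finset F, ((Set.univ : Set Y) ∩ ⋂ S ∈ u, E.sets (S : Set X)).Nonempty := by
      intro u
      set G : Set (Set X) := ((↑) : F → Set X) '' ↑u with hG
      have hGF : G ⊆ F := by rintro _ ⟨S, _, rfl⟩; exact S.2
      have hGfin : G.Finite := u.finite_toSet.image _
      obtain ⟨x, hx⟩ := hFIP G hGF hGfin
      refine ⟨E.incl x, Set.mem_univ _, ?_⟩
      apply Set.mem_iInter₂.2
      intro S hS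
      exact E.incl_mem_sets.2 (hx (S : Set X) ⟨S, hS, rfl⟩)
    have hmain := (isCompact_univ (X := Y)).inter_iInter_nonempty
      (fun S : F => E.sets (S : Set X)) hclosed hfin
    rw [Set.univ_inter] at hmain
    obtain ⟨η, hη⟩ := hmain
    refine ⟨η, Set.mem_iInter₂.2 ?_⟩
    intro A hA
    exact Set.mem_iInter.1 hη ⟨A, hA⟩

end FunctionalExtension

/-- No functional extension satisfies both Ind and Poss; equivalently, the S-topology of
a functional extension is never both Hausdorff and quasi-compact. -/
theorem stmt18 {X Y : Type*} (E : FunctionalExtension X Y) :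
    ¬ ((∀ ξ η : Y, ξ ≠ η →
          ∃ A B : Set X, Disjoint A B ∧ ξ ∈ E.sets A ∧ η ∈ E.sets B) ∧
        (∀ F : Set (Set X), (∀ G ⊆ F, G.Finite → (⋂₀ G).Nonempty) →
          (⋂ A ∈ F, E.sets A).Nonempty)) ∧
    ¬ (@T2Space Y E.sTopology ∧ @CompactSpace Y E.sTopology) := by
  exact FunctionalExtension.stmt18' E
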